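/- Let β ∈ (0,1], λ > 0 and t > 0. Then the second moment of the fractional Poisson process satisfies ∑_{n=0}^∞ n² · p_β(n|t,λ) = λ t^β / Γ(1+β) + 2 λ² t^{2β} / Γ(1+2β). Consequently its variance equals q t^β + t^{2β}(2 d − q²) with q = λ/Γ(1+β) and d = β q² B(β, 1+β), where B is the Beta function. -/

import Mathlib

/-!
With `x = λ t^β` and `s = n + k`, the double series `∑ₙ w(n) p_β(n|t,λ)` is regrouped along the
antidiagonals into `∑ₛ xˢ / Γ(βs + 1) · (Δˢ w)(0)`, where `Δ` is the forward difference with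
step `1`. The regrouping is legitimate for `w` of at most exponential growth, because `Γ` grows
superexponentially along `βs + 1`: by log-convexity, `Γ(y) / Γ(y + β) → 0`. For `w(n) = nʲ` the
differences `Δˢ w` vanish for `s > j`, so the `j`-th moment is a finite sum; for `j = 1, 2` it is
`x / Γ(1 + β)` and `x / Γ(1 + β) + 2x² / Γ(1 + 2β)`. The variance then follows from
`β B(β, 1 + β) = Γ(1 + β)² / Γ(1 + 2β)`.
-/

open Real

/-- pmf of the fractional Poisson process. -/
noncomputable def fracPoissonPMF (β lam t : ℝ) (n : ℕ) : ℝ :=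
  (lam * t ^ β) ^ n / n.factorial *
    ∑' k : ℕ, ((n + k).factorial / k.factorial : ℝ) * (-(lam * t ^ β)) ^ k /
      Real.Gamma (β * ((k : ℝ) + n) + 1)

/-- Beta function in terms of the real Gamma function. -/
noncomputable def betaFn (z₁ z₂ : ℝ) : ℝ :=
  Real.Gamma z₁ * Real.Gamma z₂ / Real.Gamma (z₁ + z₂)

open Finset Filter Topology

section Antidiagonal

variable {A : Type*} [AddCommMonoid A] [HasAntidiagonal A]

theorem summable_of_summable_sum_antidiagonal_norm {E : Type*} [NormedAddCommGroup E]
    [CompleteSpace E] {f : A × A → E}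
    (hf : Summable fun n ↦ ∑ p ∈ antidiagonal n, ‖f p‖) : Summable f := by
  refine Summable.of_norm (HasAntidiagonal.sigmaAntidiagonalEquivProd.summable_iff.mp ?_)
  refine (summable_sigma_of_nonneg fun _ ↦ norm_nonneg _).mpr ⟨fun _ ↦ .of_finite, ?_⟩
  convert hf using 2 with n
  rw [tsum_fintype]
  exact Finset.sum_coe_sort (antidiagonal n) (fun p => ‖f p‖)

theorem Summable.tsum_eq_tsum_sum_antidiagonal {α : Type*} [AddCommMonoid α] [TopologicalSpace α]
    [ContinuousAdd α] [T3Space α] {f : A × A → α} (hf : Summable f) :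
    ∑' p, f p = ∑' n, ∑ p ∈ antidiagonal n, f p := by
  rw [← HasAntidiagonal.sigmaAntidiagonalEquivProd.tsum_eq]
  refine ((HasAntidiagonal.sigmaAntidiagonalEquivProd.summable_iff.mpr hf).tsum_sigma'
    fun _ ↦ .of_finite).trans (tsum_congr fun n ↦ ?_)
  rw [tsum_fintype]
  exact Finset.sum_coe_sort (antidiagonal n) f

end Antidiagonal

namespace Real

theorem mul_Gamma_le_rpow_mul_Gamma_add {β y : ℝ} (hβ : β ∈ Set.Ioc 0 1) (hy : 0 < y) :
    y * Gamma y ≤ (y + β) ^ (1 - β) * Gamma (y + β) := by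
  obtain ⟨hβ0, hβ1⟩ := hβ
  rcases hβ1.eq_or_lt with rfl | hβ1
  · simp [Gamma_add_one hy.ne']
  have hyβ : 0 < y + β := by linarith
  have hΓ : 0 < Gamma (y + β) := Gamma_pos_of_pos hyβ
  -- log-convexity at `y + 1 = β (y + β) + (1 - β) (y + β + 1)`
  have := Gamma_mul_add_mul_le_rpow_Gamma_mul_rpow_Gamma hyβ (by linarith : 0 < y + β + 1)
    hβ0 (sub_pos.mpr hβ1) (by ring)
  rwa [show β * (y + β) + (1 - β) * (y + β + 1) = y + 1 by ring, Gamma_add_one hy.ne',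
    Gamma_add_one hyβ.ne', mul_rpow hyβ.le hΓ.le, mul_left_comm, ← rpow_add hΓ,
    add_sub_cancel, rpow_one] at this

theorem tendsto_Gamma_div_Gamma_add_atTop {β : ℝ} (hβ : β ∈ Set.Ioc 0 1) :
    Tendsto (fun y ↦ Gamma y / Gamma (y + β)) atTop (𝓝 0) := by
  have hβ0 := hβ.1
  have hbound : Tendsto (fun y ↦ (y + β) / y * (y + β) ^ (-β)) atTop (𝓝 0) := by
    have h1 : Tendsto (fun y ↦ (y + β) / y) atTop (𝓝 1) := by
      have : Tendsto (fun y : ℝ ↦ 1 + β * y⁻¹) atTop (𝓝 1) := by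
        simpa using tendsto_const_nhds.add (tendsto_inv_atTop_zero.const_mul β)
      refine this.congr' ?_
      filter_upwards [eventually_gt_atTop 0] with y hy
      field_simp
    have h2 := (tendsto_rpow_neg_atTop hβ0).comp (tendsto_atTop_add_const_right _ β tendsto_id)
    simpa using h1.mul h2
  refine tendsto_of_tendsto_of_tendsto_of_le_of_le' tendsto_const_nhds hbound ?_ ?_
  · filter_upwards [eventually_gt_atTop 0] with y hy
    exact div_nonneg (Gamma_pos_of_pos hy).le (Gamma_pos_of_pos (by linarith)).le
  · filter_upwards [eventually_gt_atTop 0] with y hy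
    have hyβ : 0 < y + β := by linarith
    have key := mul_Gamma_le_rpow_mul_Gamma_add hβ hy
    rw [div_le_iff₀ (Gamma_pos_of_pos hyβ)]
    calc Gamma y = y * Gamma y / y := by field_simp
      _ ≤ (y + β) ^ (1 - β) * Gamma (y + β) / y := by gcongr
      _ = (y + β) / y * (y + β) ^ (-β) * Gamma (y + β) := by
        rw [sub_eq_add_neg, rpow_add hyβ, rpow_one]; ring

theorem summable_pow_div_Gamma_mul_add_one {β : ℝ} (hβ : β ∈ Set.Ioc 0 1) (c : ℝ) :
    Summable fun s : ℕ ↦ c ^ s / Gamma (β * s + 1) := by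
  have hΓ : ∀ s : ℕ, 0 < Gamma (β * s + 1) := fun s ↦ Gamma_pos_of_pos (by have := hβ.1; positivity)
  have hlim : Tendsto (fun s : ℕ ↦ |c| * (Gamma (β * s + 1) / Gamma (β * s + 1 + β))) atTop
      (𝓝 0) := by
    simpa using ((tendsto_Gamma_div_Gamma_add_atTop hβ).comp <|
      tendsto_atTop_add_const_right _ 1 <|
        tendsto_natCast_atTop_atTop.const_mul_atTop hβ.1).const_mul |c|
  refine summable_of_ratio_norm_eventually_le (r := 1 / 2) (by norm_num) ?_
  filter_upwards [hlim.eventually (ge_mem_nhds (by norm_num : (0 : ℝ) < 1 / 2))] with s hs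
  rw [norm_div, norm_div, norm_pow, norm_pow, Real.norm_of_nonneg (hΓ _).le,
    Real.norm_of_nonneg (hΓ _).le, Real.norm_eq_abs, pow_succ,
    show β * ((s + 1 : ℕ) : ℝ) + 1 = β * s + 1 + β by push_cast; ring]
  calc |c| ^ s * |c| / Gamma (β * s + 1 + β)
      = |c| * (Gamma (β * s + 1) / Gamma (β * s + 1 + β)) * (|c| ^ s / Gamma (β * s + 1)) := by
        field_simp [(hΓ s).ne']
    _ ≤ 1 / 2 * (|c| ^ s / Gamma (β * s + 1)) := by
        gcongr; exact div_nonneg (by positivity) (hΓ s).le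

end Real

open scoped fwdDiff

theorem fracPoissonPMF_eq_tsum (β lam t : ℝ) (n : ℕ) :
    fracPoissonPMF β lam t n = ∑' k : ℕ, (-1) ^ k * ((n + k).choose n : ℝ) *
      (lam * t ^ β) ^ (n + k) / Gamma (β * (n + k : ℕ) + 1) := by
  rw [fracPoissonPMF, ← tsum_mul_left]
  congr 1 with k
  have hfac : ((n + k).factorial : ℝ) = (n + k).choose n * n.factorial * k.factorial := by
    rw [Nat.choose_symm_add]; exact_mod_cast (Nat.add_choose_mul_factorial_mul_factorial n k).symm
  rw [hfac, neg_pow, pow_add, show β * ((k : ℝ) + n) = β * (n + k : ℕ) by push_cast; ring]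
  field_simp

theorem sum_antidiagonal_abs_mul_choose_le {w : ℝ → ℝ} {C D : ℝ}
    (hw : ∀ n : ℕ, |w n| ≤ C * D ^ n) (x : ℝ) (s : ℕ) :
    ∑ p ∈ antidiagonal s, |w p.1| * s.choose p.1 * |x| ^ s ≤ C * ((D + 1) * |x|) ^ s := by
  calc ∑ p ∈ antidiagonal s, |w p.1| * s.choose p.1 * |x| ^ s
      ≤ ∑ p ∈ antidiagonal s, C * |x| ^ s * (s.choose p.1 • (D ^ p.1 * 1 ^ p.2)) := by
        refine sum_le_sum fun p _ ↦ ?_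
        rw [nsmul_eq_mul, one_pow, mul_one]
        calc |w p.1| * s.choose p.1 * |x| ^ s ≤ C * D ^ p.1 * s.choose p.1 * |x| ^ s := by
              gcongr; exact hw p.1
          _ = _ := by ring
    _ = C * ((D + 1) * |x|) ^ s := by
        rw [← mul_sum, ← (Commute.all D 1).add_pow' s, mul_pow]; ring

theorem tsum_mul_fracPoissonPMF_eq_tsum_fwdDiff {β : ℝ} (hβ : β ∈ Set.Ioc 0 1) (lam t : ℝ)
    {w : ℝ → ℝ} {C D : ℝ} (hw : ∀ n : ℕ, |w n| ≤ C * D ^ n) :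
    ∑' n : ℕ, w n * fracPoissonPMF β lam t n
      = ∑' s : ℕ, (lam * t ^ β) ^ s / Gamma (β * s + 1) * (Δ_[1])^[s] w 0 := by
  set x := lam * t ^ β
  have hΓ : ∀ s : ℕ, 0 < Gamma (β * s + 1) := fun s ↦ Gamma_pos_of_pos (by have := hβ.1; positivity)
  set G : ℕ × ℕ → ℝ := fun p ↦ w p.1 * ((-1) ^ p.2 * ((p.1 + p.2).choose p.1 : ℝ) *
    x ^ (p.1 + p.2) / Gamma (β * (p.1 + p.2 : ℕ) + 1))
  have hG_antidiagonal : ∀ s, ∑ p ∈ antidiagonal s, G p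
      = x ^ s / Gamma (β * s + 1) * (Δ_[1])^[s] w 0 := by
    intro s
    rw [Nat.sum_antidiagonal_eq_sum_range_succ_mk, fwdDiff_iter_eq_sum_shift, mul_sum]
    refine sum_congr rfl fun n hn ↦ ?_
    have hns : n + (s - n) = s := Nat.add_sub_cancel' (by simpa [Nat.lt_succ_iff] using hn)
    simp only [G, hns, zero_add, nsmul_eq_mul, mul_one, zsmul_eq_mul]
    push_cast
    ring
  have hG_norm : ∀ s, ∑ p ∈ antidiagonal s, ‖G p‖
      ≤ C * ((D + 1) * |x|) ^ s / Gamma (β * s + 1) := by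
    intro s
    rw [le_div_iff₀ (hΓ s), sum_mul]
    refine (sum_le_sum fun p hp ↦ le_of_eq ?_).trans (sum_antidiagonal_abs_mul_choose_le hw x s)
    simp only [G, mem_antidiagonal.mp hp, Real.norm_eq_abs, abs_mul, abs_div, abs_pow, abs_neg,
      abs_one, one_pow, one_mul, Nat.abs_cast, abs_of_pos (hΓ s)]
    field_simp [(hΓ s).ne']
  have hG : Summable G := summable_of_summable_sum_antidiagonal_norm <|
    Summable.of_nonneg_of_le (fun s ↦ sum_nonneg fun p _ ↦ norm_nonneg _) hG_norm
      (by simpa [mul_div_assoc] using (summable_pow_div_Gamma_mul_add_one hβ _).mul_left C)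
  calc ∑' n : ℕ, w n * fracPoissonPMF β lam t n = ∑' n, ∑' k, G (n, k) := by
        simp_rw [fracPoissonPMF_eq_tsum, ← tsum_mul_left]
        rfl
    _ = ∑' p, G p := hG.tsum_prod.symm
    _ = _ := by rw [hG.tsum_eq_tsum_sum_antidiagonal]; exact tsum_congr hG_antidiagonal

theorem tsum_pow_mul_fracPoissonPMF_eq_sum_fwdDiff {β : ℝ} (hβ : β ∈ Set.Ioc 0 1) (lam t : ℝ)
    (j : ℕ) :
    ∑' n : ℕ, (n : ℝ) ^ j * fracPoissonPMF β lam t n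
      = ∑ s ∈ range (j + 1), (lam * t ^ β) ^ s / Gamma (β * s + 1) *
          (Δ_[1])^[s] (fun r : ℝ ↦ r ^ j) 0 := by
  have hgrowth : ∀ n : ℕ, |(n : ℝ) ^ j| ≤ j.factorial * exp 1 ^ n := fun n ↦ by
    rw [abs_of_nonneg (by positivity), exp_one_pow, ← div_le_iff₀' (by positivity)]
    exact pow_div_factorial_le_exp (n : ℝ) n.cast_nonneg j
  rw [tsum_mul_fracPoissonPMF_eq_tsum_fwdDiff hβ lam t (w := fun r : ℝ ↦ r ^ j) hgrowth]
  refine tsum_eq_sum fun s hs ↦ ?_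
  rw [fwdDiff_iter_pow_eq_zero_of_lt (by simpa using hs), Pi.zero_apply, mul_zero]

theorem tsum_natCast_mul_fracPoissonPMF {β : ℝ} (hβ : β ∈ Set.Ioc 0 1) (lam t : ℝ) :
    ∑' n : ℕ, (n : ℝ) * fracPoissonPMF β lam t n = lam * t ^ β / Gamma (1 + β) := by
  simpa [sum_range_succ, fwdDiff, add_comm] using
    tsum_pow_mul_fracPoissonPMF_eq_sum_fwdDiff hβ lam t 1

theorem tsum_natCast_sq_mul_fracPoissonPMF {β : ℝ} (hβ : β ∈ Set.Ioc 0 1) (lam t : ℝ) :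
    ∑' n : ℕ, (n : ℝ) ^ 2 * fracPoissonPMF β lam t n
      = lam * t ^ β / Gamma (1 + β) + 2 * (lam * t ^ β) ^ 2 / Gamma (1 + 2 * β) := by
  rw [tsum_pow_mul_fracPoissonPMF_eq_sum_fwdDiff hβ lam t 2]
  norm_num [sum_range_succ, fwdDiff, add_comm _ (1 : ℝ), mul_comm β]
  ring

theorem mul_betaFn_one_add {β : ℝ} (hβ : β ≠ 0) :
    β * betaFn β (1 + β) = Gamma (1 + β) ^ 2 / Gamma (1 + 2 * β) := by
  rw [betaFn, show β + (1 + β) = 1 + 2 * β by ring, add_comm 1 β, Gamma_add_one hβ]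
  ring

theorem fpp_second_moment_and_variance_general (β lam t : ℝ) (hβ : β ∈ Set.Ioc (0 : ℝ) 1)
    (ht : 0 < t)
    (q d : ℝ) (hq : q = lam / Real.Gamma (1 + β))
    (hd : d = β * q ^ 2 * betaFn β (1 + β)) :
    (∑' n : ℕ, (n : ℝ) ^ 2 * fracPoissonPMF β lam t n
        = lam * t ^ β / Real.Gamma (1 + β)
          + 2 * lam ^ 2 * t ^ (2 * β) / Real.Gamma (1 + 2 * β))
    ∧ (∑' n : ℕ, (n : ℝ) ^ 2 * fracPoissonPMF β lam t n)
        - (∑' n : ℕ, (n : ℝ) * fracPoissonPMF β lam t n) ^ 2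
        = q * t ^ β + t ^ (2 * β) * (2 * d - q ^ 2) := by
  have ht2 : t ^ (2 * β) = (t ^ β) ^ 2 := by
    rw [mul_comm, rpow_mul ht.le, rpow_two]
  have hΓ : Gamma (1 + β) ≠ 0 := (Gamma_pos_of_pos (by linarith [hβ.1])).ne'
  have hd' : d = lam ^ 2 / Gamma (1 + 2 * β) := by
    rw [hd, mul_right_comm, mul_betaFn_one_add hβ.1.ne', hq]
    field_simp
  rw [tsum_natCast_sq_mul_fracPoissonPMF hβ, tsum_natCast_mul_fracPoissonPMF hβ, hd', hq, ht2]
  constructor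
  · ring
  · field_simp
    ring

theorem fpp_second_moment_and_variance (β lam t : ℝ) (hβ : β ∈ Set.Ioc (0 : ℝ) 1)
    (hlam : 0 < lam) (ht : 0 < t)
    (q d : ℝ) (hq : q = lam / Real.Gamma (1 + β))
    (hd : d = β * q ^ 2 * betaFn β (1 + β)) :
    (∑' n : ℕ, (n : ℝ) ^ 2 * fracPoissonPMF β lam t n
        = lam * t ^ β / Real.Gamma (1 + β)
          + 2 * lam ^ 2 * t ^ (2 * β) / Real.Gamma (1 + 2 * β))
    ∧ (∑' n : ℕ, (n : ℝ) ^ 2 * fracPoissonPMF β lam t n)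
        - (∑' n : ℕ, (n : ℝ) * fracPoissonPMF β lam t n) ^ 2
        = q * t ^ β + t ^ (2 * β) * (2 * d - q ^ 2) :=
  fpp_second_moment_and_variance_general β lam t hβ ht q d hq hd
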